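/- Let G be an abelian group, let e₀, e₁, e₂ ∈ G, let S = {e₀ + e₁, e₁ + e₂, e₂ + e₀}, and define the relation r on G by r(x, y) if and only if there exist s ∈ S and t ∈ S with x + s = y + t. Then for every x ∈ G one has r(x, x + e₁ − e₀), r(x, x + e₂ − e₁), and r(x, x + e₀ − e₂). Moreover, if e₁ − e₀ has infinite order in G, then the equivalence class of x under the equivalence relation generated by r is an infinite set. -/

import Mathlib

/-! Since `x + (eⱼ + eₖ) = (x + eⱼ - eᵢ) + (eₖ + eᵢ)`, every `x` is related to `x + d` with
`d = e₁ - e₀`; hence the class of `x` contains the coset `x + ℤ d`, which is infinite when `d` has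
infinite order. -/

open Relation

namespace Relation.EqvGen

variable {G : Type*} [AddGroup G] {r : G → G → Prop} {d : G}

theorem self_add_zsmul (hr : ∀ x, r x (x + d)) (x : G) (n : ℤ) : EqvGen r x (x + n • d) := by
  induction n using Int.induction_on with
  | zero => simpa using EqvGen.refl x
  | succ k ih =>
    refine ih.trans _ _ _ (EqvGen.rel _ _ ?_)
    rw [add_one_zsmul, ← add_assoc]
    exact hr _
  | pred k ih =>
    refine ih.trans _ _ _ (EqvGen.symm _ _ (EqvGen.rel _ _ ?_))
    have h := hr (x + (-(k : ℤ) - 1) • d)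
    rwa [add_assoc, ← add_one_zsmul, sub_add_cancel] at h

theorem setOf_infinite_of_not_isOfFinAddOrder (hr : ∀ x, r x (x + d))
    (hd : ¬IsOfFinAddOrder d) (x : G) : {y | EqvGen r x y}.Infinite :=
  Set.infinite_of_injective_forall_mem
    ((add_right_injective x).comp (injective_zsmul_iff_not_isOfFinAddOrder.mpr hd))
    (self_add_zsmul hr x)

end Relation.EqvGen

theorem add_add_eq_add_add_sub_add_add {G : Type*} [AddCommGroup G] (x a b c : G) :
    x + (b + c) = x + b - a + (c + a) := by
  abel

/-- In an abelian group `G` with `S = {e₀+e₁, e₁+e₂, e₂+e₀}` and the relation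
`r x y ↔ ∃ s, t ∈ S, x + s = y + t`, every `x` satisfies `r x (x + e₁ − e₀)`,
`r x (x + e₂ − e₁)` and `r x (x + e₀ − e₂)`; and if `e₁ − e₀` has infinite order,
the equivalence class of `x` under the equivalence relation generated by `r` is
infinite. -/
theorem stmt12 (G : Type*) [AddCommGroup G] (e₀ e₁ e₂ : G)
    (S : Set G) (hS : S = {e₀ + e₁, e₁ + e₂, e₂ + e₀})
    (r : G → G → Prop) (hr : ∀ x y : G, r x y ↔ ∃ s ∈ S, ∃ t ∈ S, x + s = y + t) :
    (∀ x : G, r x (x + e₁ - e₀) ∧ r x (x + e₂ - e₁) ∧ r x (x + e₀ - e₂)) ∧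
    ((∀ n : ℤ, n ≠ 0 → n • (e₁ - e₀) ≠ 0) →
      ∀ x : G, {y : G | Relation.EqvGen r x y}.Infinite) := by
  subst hS
  have hrel : ∀ x, r x (x + e₁ - e₀) ∧ r x (x + e₂ - e₁) ∧ r x (x + e₀ - e₂) := fun x => by
    simp only [hr]
    refine ⟨⟨e₁ + e₂, ?_, e₂ + e₀, ?_, add_add_eq_add_add_sub_add_add x e₀ e₁ e₂⟩,
      ⟨e₂ + e₀, ?_, e₀ + e₁, ?_, add_add_eq_add_add_sub_add_add x e₁ e₂ e₀⟩,
      ⟨e₀ + e₁, ?_, e₁ + e₂, ?_, add_add_eq_add_add_sub_add_add x e₂ e₀ e₁⟩⟩ <;> simp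
  refine ⟨hrel, fun hd => EqvGen.setOf_infinite_of_not_isOfFinAddOrder (d := e₁ - e₀)
    (fun x => add_sub_assoc x e₁ e₀ ▸ (hrel x).1)
    (isOfFinAddOrder_iff_zsmul_eq_zero.not.mpr fun ⟨n, hn, hnd⟩ => hd n hn hnd)⟩
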